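/- arXiv:1701.05500 — 2 statements merged into one kernel-verified Lean document; each statement's English description precedes it below -/
import Mathlib

section
/- Suppose a pseudo-Laman bigraph B=(G,H) with biedge set ℰ without self-loops untangles via a biedge ē∈ℰ into bigraphs B₁ and B₂ (with ℰ₁ and ℰ₂ both nonempty), where ē is a bridge in G but not a bridge in H. Then B does not have Laman number N with respect to ē for any N≥1. -/
set_option maxHeartbeats 1000000

noncomputable section
open Classical

namespace LamanPaper

variable {V E : Type}

/-- The adjacency relation induced by an incidence map `ends`. -/
def adjRel (ends : E → Sym2 V) : V → V → Prop := fun u v => ∃ e : E, ends e = s(u, v)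

/-- The setoid of connected components of the graph with incidence map `ends`. -/
def ccSetoid (ends : E → Sym2 V) : Setoid V :=
  ⟨Relation.EqvGen (adjRel ends), Relation.EqvGen.is_equivalence _⟩

/-- The number of connected components. -/
def numCC (ends : E → Sym2 V) : ℕ := Nat.card (Quotient (ccSetoid ends))

/-- The dimension of a graph: number of vertices minus number of connected components. -/
def gDim (ends : E → Sym2 V) : ℕ := Nat.card V - numCC ends

/-- Restriction of a graph to a set of edges. -/
def restrictEnds (ends : E → Sym2 V) (S : Set E) : {e : E // e ∈ S} → Sym2 V :=
  fun e => ends e.1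

/-- Deletion of a set of edges from a graph. -/
def deleteEnds (ends : E → Sym2 V) (S : Set E) : {e : E // e ∉ S} → Sym2 V :=
  fun e => ends e.1

/-- The setoid on vertices generated by contracting the edges in `S`. -/
def contrSetoid (ends : E → Sym2 V) (S : Set E) : Setoid V :=
  ⟨Relation.EqvGen fun u v => ∃ e ∈ S, ends e = s(u, v), Relation.EqvGen.is_equivalence _⟩

/-- Contraction of the edges in `S`: the remaining edges join the equivalence classes of
their endpoints. -/
def contractEnds (ends : E → Sym2 V) (S : Set E) :
    {e : E // e ∉ S} → Sym2 (Quotient (contrSetoid ends S)) :=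
  fun e => (ends e.1).map (Quotient.mk (contrSetoid ends S))

/-- An edge is a bridge if deleting it increases the number of connected components. -/
def IsBridge (ends : E → Sym2 V) (e : E) : Prop :=
  numCC ends < numCC (deleteEnds ends ({e} : Set E))

/-- The smaller endpoint of an (unordered) edge, with respect to a linear order. -/
def sMin [LinearOrder V] (s : Sym2 V) : V :=
  Sym2.lift ⟨fun a b => min a b, fun a b => min_comm a b⟩ s

/-- The larger endpoint of an (unordered) edge, with respect to a linear order. -/
def sMax [LinearOrder V] (s : Sym2 V) : V :=
  Sym2.lift ⟨fun a b => max a b, fun a b => max_comm a b⟩ s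

theorem sMin_mem [LinearOrder V] (s : Sym2 V) : sMin s ∈ s := by
  induction s using Sym2.ind with
  | _ x y => rcases min_choice x y with h | h <;> simp [sMin, Sym2.lift_mk, h, Sym2.mem_iff]

theorem sMax_mem [LinearOrder V] (s : Sym2 V) : sMax s ∈ s := by
  induction s using Sym2.ind with
  | _ x y => rcases max_choice x y with h | h <;> simp [sMax, Sym2.lift_mk, h, Sym2.mem_iff]

/-- A bigraph: a pair of finite multigraphs `G = (V, ℰ)` and `H = (W, ℰ)` sharing the same
set of (bi)edges, together with fixed total orders on the two vertex sets. -/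
structure Bigraph where
  ℰ : Type
  V : Type
  W : Type
  finE : Finite ℰ
  finV : Finite V
  finW : Finite W
  τG : ℰ → Sym2 V
  τH : ℰ → Sym2 W
  ordV : LinearOrder V
  ordW : LinearOrder W

namespace Bigraph

variable (B : Bigraph)

instance : Finite B.ℰ := B.finE
instance : Finite B.V := B.finV
instance : Finite B.W := B.finW

/-- The dimension of the first graph of a bigraph. -/
def dimG : ℕ := gDim B.τG

/-- The dimension of the second graph of a bigraph. -/
def dimH : ℕ := gDim B.τH

/-- A bigraph is pseudo-Laman if `dim G + dim H = |ℰ| + 1`. -/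
def PseudoLaman : Prop := B.dimG + B.dimH = Nat.card B.ℰ + 1

/-- A bigraph has a (self-)loop if some biedge is a self-loop in `G` or in `H`. -/
def HasLoop : Prop := (∃ e, (B.τG e).IsDiag) ∨ (∃ e, (B.τH e).IsDiag)

/-- The set `P` of ordered pairs of distinct vertices of `G` joined by some edge. -/
def Pset : Set (B.V × B.V) := {p | p.1 ≠ p.2 ∧ ∃ e, B.τG e = s(p.1, p.2)}

/-- The set `Q` of ordered pairs of distinct vertices of `H` joined by some edge. -/
def Qset : Set (B.W × B.W) := {q | q.1 ≠ q.2 ∧ ∃ e, B.τH e = s(q.1, q.2)}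

/-- The smaller endpoint (w.r.t. the fixed total order) of a biedge in `G`. -/
def eFstG (e : B.ℰ) : B.V := letI := B.ordV; sMin (B.τG e)

/-- The larger endpoint of a biedge in `G`. -/
def eSndG (e : B.ℰ) : B.V := letI := B.ordV; sMax (B.τG e)

/-- The smaller endpoint of a biedge in `H`. -/
def eFstH (e : B.ℰ) : B.W := letI := B.ordW; sMin (B.τH e)

/-- The larger endpoint of a biedge in `H`. -/
def eSndH (e : B.ℰ) : B.W := letI := B.ordW; sMax (B.τH e)

theorem eFstG_mem (e : B.ℰ) : B.eFstG e ∈ B.τG e := by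
  letI := B.ordV; exact sMin_mem _

theorem eSndG_mem (e : B.ℰ) : B.eSndG e ∈ B.τG e := by
  letI := B.ordV; exact sMax_mem _

theorem eFstH_mem (e : B.ℰ) : B.eFstH e ∈ B.τH e := by
  letI := B.ordW; exact sMin_mem _

theorem eSndH_mem (e : B.ℰ) : B.eSndH e ∈ B.τH e := by
  letI := B.ordW; exact sMax_mem _

/-- The affine solution set `Z^B(λ)` of a bigraph with distinguished biedge `ebar` and
parameters `lam`. -/
def ZSet (ebar : B.ℰ) (lam : {e : B.ℰ // e ≠ ebar} → ℂ) :
    Set ((↥B.Pset → ℂ) × (↥B.Qset → ℂ)) :=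
  {xy |
    (∀ p : ↥B.Pset, (p : B.V × B.V) = (B.eFstG ebar, B.eSndG ebar) → xy.1 p = 1) ∧
    (∀ q : ↥B.Qset, (q : B.W × B.W) = (B.eFstH ebar, B.eSndH ebar) → xy.2 q = 1) ∧
    (∀ e : {e : B.ℰ // e ≠ ebar}, ∀ p : ↥B.Pset, ∀ q : ↥B.Qset,
      (p : B.V × B.V) = (B.eFstG e.1, B.eSndG e.1) →
      (q : B.W × B.W) = (B.eFstH e.1, B.eSndH e.1) →
      xy.1 p * xy.2 q = lam e) ∧
    (∀ (n : ℕ) (u : ℕ → B.V) (w : Fin n → ↥B.Pset),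
      (∀ i : Fin n, (w i : B.V × B.V) = (u i.1, u (i.1 + 1))) → u n = u 0 →
      ∑ i, xy.1 (w i) = 0) ∧
    (∀ (n : ℕ) (u : ℕ → B.W) (w : Fin n → ↥B.Qset),
      (∀ i : Fin n, (w i : B.W × B.W) = (u i.1, u (i.1 + 1))) → u n = u 0 →
      ∑ i, xy.2 (w i) = 0)}

/-- `B` has Laman number `N` with respect to the biedge `ebar`:  there is a nonzero
polynomial `p` in the parameters such that whenever `p` does not vanish, the solution set
`Z^B(λ)` has exactly `N` elements.  By convention a bigraph containing a self-loop has
Laman number `0`. -/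
def HasLamanNumber (ebar : B.ℰ) (N : ℕ) : Prop :=
  (B.HasLoop ∧ N = 0) ∨
  (¬ B.HasLoop ∧ ∃ P : MvPolynomial {e : B.ℰ // e ≠ ebar} ℂ, P ≠ 0 ∧
    ∀ lam : {e : B.ℰ // e ≠ ebar} → ℂ, MvPolynomial.eval lam P ≠ 0 →
      (B.ZSet ebar lam).Finite ∧ Nat.card ↥(B.ZSet ebar lam) = N)

/-- The bigraph obtained by restricting the biedges to a subset `S` (both in `G` and `H`). -/
def restrict (S : Set B.ℰ) : Bigraph where
  ℰ := {e : B.ℰ // e ∈ S}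
  V := B.V
  W := B.W
  finE := Subtype.finite
  finV := B.finV
  finW := B.finW
  τG := fun e => B.τG e.1
  τH := fun e => B.τH e.1
  ordV := B.ordV
  ordW := B.ordW

/-- The bigraph `^M B = (G / M, H ∖ M)`: contract the biedges of `M` in `G` and delete them
in `H`. -/
def ctrG (M : Set B.ℰ) (ord : LinearOrder (Quotient (contrSetoid B.τG M))) : Bigraph where
  ℰ := {e : B.ℰ // e ∉ M}
  V := Quotient (contrSetoid B.τG M)
  W := B.W
  finE := Subtype.finite
  finV := Quotient.finite _
  finW := B.finW
  τG := contractEnds B.τG M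
  τH := fun e => B.τH e.1
  ordV := ord
  ordW := B.ordW

/-- The bigraph `B ^ M = (G ∖ M, H / M)`: delete the biedges of `M` in `G` and contract them
in `H`. -/
def ctrH (M : Set B.ℰ) (ord : LinearOrder (Quotient (contrSetoid B.τH M))) : Bigraph where
  ℰ := {e : B.ℰ // e ∉ M}
  V := B.V
  W := Quotient (contrSetoid B.τH M)
  finE := Subtype.finite
  finV := B.finV
  finW := Quotient.finite _
  τG := fun e => B.τG e.1
  τH := contractEnds B.τH M
  ordV := B.ordV
  ordW := ord

/-! ### Bidistances -/

/-- Symmetry of a function on `P`: `d_V(u,v) = d_V(v,u)`. -/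
def BidistSymmG (dV : ↥B.Pset → ℚ) : Prop :=
  ∀ p p' : ↥B.Pset, (p' : B.V × B.V) = ((p : B.V × B.V).2, (p : B.V × B.V).1) → dV p' = dV p

/-- Symmetry of a function on `Q`: `d_W(t,w) = d_W(w,t)`. -/
def BidistSymmH (dW : ↥B.Qset → ℚ) : Prop :=
  ∀ q q' : ↥B.Qset, (q' : B.W × B.W) = ((q : B.W × B.W).2, (q : B.W × B.W).1) → dW q' = dW q

/-- The sum condition: `d_V(u,v) + d_W(t,w) = wt(e)` for every biedge `e ≠ ebar`. -/
def BidistSum (ebar : B.ℰ) (wt : {e : B.ℰ // e ≠ ebar} → ℚ)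
    (dV : ↥B.Pset → ℚ) (dW : ↥B.Qset → ℚ) : Prop :=
  ∀ e : {e : B.ℰ // e ≠ ebar}, ∀ p : ↥B.Pset, ∀ q : ↥B.Qset,
    s((p : B.V × B.V).1, (p : B.V × B.V).2) = B.τG e.1 →
    s((q : B.W × B.W).1, (q : B.W × B.W).2) = B.τH e.1 →
    dV p + dW q = wt e

/-- The base condition: `d_V(ū,v̄) = d_W(t̄,w̄) = 0` on the distinguished biedge. -/
def BidistBase (ebar : B.ℰ) (dV : ↥B.Pset → ℚ) (dW : ↥B.Qset → ℚ) : Prop :=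
  (∀ p : ↥B.Pset, s((p : B.V × B.V).1, (p : B.V × B.V).2) = B.τG ebar → dV p = 0) ∧
  (∀ q : ↥B.Qset, s((q : B.W × B.W).1, (q : B.W × B.W).2) = B.τH ebar → dW q = 0)

/-- On every closed walk in `G`, the minimum of `d_V` over the consecutive vertex pairs is
attained at least twice. -/
def BidistMinG (dV : ↥B.Pset → ℚ) : Prop :=
  ∀ (n : ℕ) (u : ℕ → B.V) (w : Fin n → ↥B.Pset),
    (∀ i : Fin n, (w i : B.V × B.V) = (u i.1, u (i.1 + 1))) → u n = u 0 →
    ∀ i : Fin n, (∀ k, dV (w i) ≤ dV (w k)) → ∃ j, j ≠ i ∧ dV (w j) = dV (w i)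

/-- On every closed walk in `H`, the minimum of `d_W` over the consecutive vertex pairs is
attained at least twice. -/
def BidistMinH (dW : ↥B.Qset → ℚ) : Prop :=
  ∀ (n : ℕ) (u : ℕ → B.W) (w : Fin n → ↥B.Qset),
    (∀ i : Fin n, (w i : B.W × B.W) = (u i.1, u (i.1 + 1))) → u n = u 0 →
    ∀ i : Fin n, (∀ k, dW (w i) ≤ dW (w k)) → ∃ j, j ≠ i ∧ dW (w j) = dW (w i)

/-- A bidistance on `B` compatible with the weight vector `wt`. -/
def IsBidistance (ebar : B.ℰ) (wt : {e : B.ℰ // e ≠ ebar} → ℚ)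
    (dV : ↥B.Pset → ℚ) (dW : ↥B.Qset → ℚ) : Prop :=
  B.BidistSymmG dV ∧ B.BidistSymmH dW ∧ B.BidistSum ebar wt dV dW ∧
  B.BidistBase ebar dV dW ∧ B.BidistMinG dV ∧ B.BidistMinH dW

/-! ### The quotient bigraph `B_d` -/

/-- The value of `d_V` on (the endpoint pair of) a biedge. -/
def gvalG (dV : ↥B.Pset → ℚ) (e : B.ℰ) : ℚ :=
  if h : ∃ p : ↥B.Pset, s((p : B.V × B.V).1, (p : B.V × B.V).2) = B.τG e then dV h.choose
  else 0

/-- The value of `d_W` on (the endpoint pair of) a biedge. -/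
def gvalH (dW : ↥B.Qset → ℚ) (e : B.ℰ) : ℚ :=
  if h : ∃ q : ↥B.Qset, s((q : B.W × B.W).1, (q : B.W × B.W).2) = B.τH e then dW h.choose
  else 0

/-- Incidences of the graph `G`: pairs of a biedge and one of its endpoints. -/
def IncG := {q : B.ℰ × B.V // q.2 ∈ B.τG q.1}

/-- Incidences of the graph `H`. -/
def IncH := {q : B.ℰ × B.W // q.2 ∈ B.τH q.1}

instance : Finite B.IncG := by unfold IncG; infer_instance
instance : Finite B.IncH := by unfold IncH; infer_instance

/-- Two incidences `(e,v)`, `(e',v')` of `G` are identified in `B_d` if the `d_V`-levels of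
`e` and `e'` agree (say equal to `α`) and `v`, `v'` are connected by edges of level `> α`. -/
def relIncG (dV : ↥B.Pset → ℚ) : B.IncG → B.IncG → Prop := fun a b =>
  B.gvalG dV a.1.1 = B.gvalG dV b.1.1 ∧
  Relation.EqvGen (fun u v => ∃ e, B.gvalG dV a.1.1 < B.gvalG dV e ∧ B.τG e = s(u, v))
    a.1.2 b.1.2

def relIncH (dW : ↥B.Qset → ℚ) : B.IncH → B.IncH → Prop := fun a b =>
  B.gvalH dW a.1.1 = B.gvalH dW b.1.1 ∧
  Relation.EqvGen (fun u v => ∃ e, B.gvalH dW a.1.1 < B.gvalH dW e ∧ B.τH e = s(u, v))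
    a.1.2 b.1.2

def incSetoidG (dV : ↥B.Pset → ℚ) : Setoid B.IncG :=
  ⟨Relation.EqvGen (B.relIncG dV), Relation.EqvGen.is_equivalence _⟩

def incSetoidH (dW : ↥B.Qset → ℚ) : Setoid B.IncH :=
  ⟨Relation.EqvGen (B.relIncH dW), Relation.EqvGen.is_equivalence _⟩

/-- The vertices of the first graph `G_{d_V}` of the quotient bigraph `B_d`:
classes of incidences.  This realizes the disjoint union of the contractions
`G_{≥α} / G_{>α}` (with isolated vertices discarded). -/
def QVertG (dV : ↥B.Pset → ℚ) := Quotient (B.incSetoidG dV)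

def QVertH (dW : ↥B.Qset → ℚ) := Quotient (B.incSetoidH dW)

/-- The incidence map of `G_{d_V}`. -/
def quotEndsG (dV : ↥B.Pset → ℚ) : B.ℰ → Sym2 (B.QVertG dV) := fun e =>
  s(Quotient.mk (B.incSetoidG dV) ⟨(e, B.eFstG e), B.eFstG_mem e⟩,
    Quotient.mk (B.incSetoidG dV) ⟨(e, B.eSndG e), B.eSndG_mem e⟩)

/-- The incidence map of `H_{d_W}`. -/
def quotEndsH (dW : ↥B.Qset → ℚ) : B.ℰ → Sym2 (B.QVertH dW) := fun e =>
  s(Quotient.mk (B.incSetoidH dW) ⟨(e, B.eFstH e), B.eFstH_mem e⟩,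
    Quotient.mk (B.incSetoidH dW) ⟨(e, B.eSndH e), B.eSndH_mem e⟩)

/-- The quotient bigraph `B_d = (G_{d_V}, H_{d_W})` of a bigraph by a bidistance `(d_V, d_W)`,
with arbitrarily fixed total orders on the new vertex sets.  It has the same biedges as `B`. -/
def quotBigraph (dV : ↥B.Pset → ℚ) (dW : ↥B.Qset → ℚ)
    (oV : LinearOrder (B.QVertG dV)) (oW : LinearOrder (B.QVertH dW)) : Bigraph where
  ℰ := B.ℰ
  V := B.QVertG dV
  W := B.QVertH dW
  finE := B.finE
  finV := Quotient.finite _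
  finW := Quotient.finite _
  τG := B.quotEndsG dV
  τH := B.quotEndsH dW
  ordV := oV
  ordW := oW

/-! ### Untangling -/

/-- `B` untangles via the biedge `ebar` with respect to the decomposition
`ℰ = E1 ⊔ E2 ⊔ {ebar}`, `V = V1 ⊔ V2`, `W = W1 ⊔ W2`:  the graph `G` is the disjoint union
of the subgraph on `V1` with edges `E1 ∪ {ebar}` and the subgraph on `V2` with edges `E2`,
while `H` is the disjoint union of the subgraph on `W1` with edges `E1` and the subgraph on
`W2` with edges `E2 ∪ {ebar}`.  The two bigraphs into which `B` untangles are then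
`B₁ = B.restrict E1` and `B₂ = B.restrict E2`. -/
def Untangles (ebar : B.ℰ) (E1 E2 : Set B.ℰ) (V1 V2 : Set B.V) (W1 W2 : Set B.W) : Prop :=
  ebar ∉ E1 ∧ ebar ∉ E2 ∧ E1 ∩ E2 = ∅ ∧ (∀ e : B.ℰ, e = ebar ∨ e ∈ E1 ∨ e ∈ E2) ∧
  V1 ∩ V2 = ∅ ∧ V1 ∪ V2 = Set.univ ∧
  (∀ e ∈ E1, ∀ v, v ∈ B.τG e → v ∈ V1) ∧ (∀ v, v ∈ B.τG ebar → v ∈ V1) ∧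
  (∀ e ∈ E2, ∀ v, v ∈ B.τG e → v ∈ V2) ∧
  W1 ∩ W2 = ∅ ∧ W1 ∪ W2 = Set.univ ∧
  (∀ e ∈ E1, ∀ x, x ∈ B.τH e → x ∈ W1) ∧
  (∀ e ∈ E2, ∀ x, x ∈ B.τH e → x ∈ W2) ∧ (∀ x, x ∈ B.τH ebar → x ∈ W2)

/-! ### The rational map `f_B` -/

/-- The vector of coordinates of the rational map `f_B`, evaluated on representatives
`x : V → ℂ` and `y : W → ℂ`:  the `e`-th coordinate is `(x_u - x_v)(y_t - y_w)` where
`{u,v} = τ_G(e)` with `u ≺ v` and `{t,w} = τ_H(e)` with `t ≺ w`.  (For a self-loop the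
corresponding factor is `0`.) -/
def fVec (x : B.V → ℂ) (y : B.W → ℂ) : B.ℰ → ℂ :=
  fun e => (x (B.eFstG e) - x (B.eSndG e)) * (y (B.eFstH e) - y (B.eSndH e))

/-- The subspace `L_G` of vectors that are constant on each connected component of `G`. -/
def LG : Submodule ℂ (B.V → ℂ) where
  carrier := {x | ∀ u v : B.V, Relation.EqvGen (adjRel B.τG) u v → x u = x v}
  add_mem' := by
    intro a b ha hb u v h
    simp only [Pi.add_apply, ha u v h, hb u v h]
  zero_mem' := by intro u v _; rfl
  smul_mem' := by
    intro c a ha u v h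
    simp only [Pi.smul_apply, ha u v h]

/-- The subspace `L_H` of vectors that are constant on each connected component of `H`. -/
def LH : Submodule ℂ (B.W → ℂ) where
  carrier := {y | ∀ u v : B.W, Relation.EqvGen (adjRel B.τH) u v → y u = y v}
  add_mem' := by
    intro a b ha hb u v h
    simp only [Pi.add_apply, ha u v h, hb u v h]
  zero_mem' := by intro u v _; rfl
  smul_mem' := by
    intro c a ha u v h
    simp only [Pi.smul_apply, ha u v h]

/-- Dominance of the rational map `f_B`:  the image of `f_B` is not contained in any
proper algebraic subset of `ℙ(ℂ^ℰ)`, equivalently in no zero set of a nonzero homogeneous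
polynomial. -/
def FDominant : Prop :=
  ¬ ∃ (n : ℕ) (P : MvPolynomial B.ℰ ℂ), P ≠ 0 ∧ P.IsHomogeneous n ∧
      ∀ (x : B.V → ℂ) (y : B.W → ℂ), MvPolynomial.eval (B.fVec x y) P = 0

end Bigraph


/-! Take a solution `(x, y) ∈ Z^B(λ)` with `λ_{e₁} ≠ 0` for some `e₁ ∈ ℰ₁`. Multiplying `x` by `t`
on the `V₁`-side and `y` by `t⁻¹` on the `W₁`-side preserves every product equation, since for a
biedge of `ℰ₁` both factors are scaled and for one of `ℰ₂` neither is. The cycle equations in `H`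
survive because `W₁` is a union of components. In `G` the bridge `ē` lies on the `V₁`-side but
must keep `x(ē) = 1`, so one scales `x - δg` instead of `x`, where `g` is the indicator of one
side of the bridge: `δg` vanishes off `ē` and its closed-walk sums telescope to zero. This gives
infinitely many solutions as soon as there is one. -/

theorem mk_sMin_sMax [LinearOrder V] (s : Sym2 V) : s(sMin s, sMax s) = s := by
  induction s using Sym2.ind with
  | _ a b =>
    simp only [sMin, sMax, Sym2.lift_mk]
    rcases le_total a b with h | h
    · rw [min_eq_left h, max_eq_right h]
    · rw [min_eq_right h, max_eq_left h, Sym2.eq_swap]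

theorem sMin_ne_sMax [LinearOrder V] {s : Sym2 V} (h : ¬ s.IsDiag) : sMin s ≠ sMax s := by
  induction s using Sym2.ind with
  | _ a b =>
    simp only [sMin, sMax, Sym2.lift_mk]
    rcases le_total a b with h' | h'
    · rw [min_eq_left h', max_eq_right h']
      exact fun hab => h (Sym2.mk_isDiag_iff.mpr hab)
    · rw [min_eq_right h', max_eq_left h']
      exact fun hab => h (Sym2.mk_isDiag_iff.mpr hab.symm)

theorem fst_mem_iff_snd_mem {ends : E → Sym2 V} {A : Set V}
    (hside : ∀ e, (∀ v ∈ ends e, v ∈ A) ∨ ∀ v ∈ ends e, v ∉ A) {e : E} {a b : V}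
    (he : ends e = s(a, b)) : a ∈ A ↔ b ∈ A := by
  rcases hside e with h | h
  · exact iff_of_true (h a (he ▸ Sym2.mem_mk_left a b)) (h b (he ▸ Sym2.mem_mk_right a b))
  · exact iff_of_false (h a (he ▸ Sym2.mem_mk_left a b)) (h b (he ▸ Sym2.mem_mk_right a b))

theorem IsBridge.not_eqvGen_deleteEnds {ends : E → Sym2 V} {ebar : E} {u v : V}
    (hb : IsBridge ends ebar) (hend : ends ebar = s(u, v)) :
    ¬ Relation.EqvGen (adjRel (deleteEnds ends {ebar})) u v := by
  intro huv
  have hadj : ∀ a b, adjRel ends a b → Relation.EqvGen (adjRel (deleteEnds ends {ebar})) a b := by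
    rintro a b ⟨e, he⟩
    by_cases hee : e = ebar
    · subst hee
      rcases Sym2.eq_iff.mp (hend.symm.trans he) with ⟨rfl, rfl⟩ | ⟨rfl, rfl⟩
      · exact huv
      · exact huv.symm
    · exact .rel _ _ ⟨⟨e, hee⟩, he⟩
  have hcc : ccSetoid (deleteEnds ends {ebar}) = ccSetoid ends :=
    le_antisymm (Setoid.eqvGen_mono fun a b ⟨e, he⟩ => ⟨e.1, he⟩)
      (Setoid.eqvGen_le (s := ccSetoid (deleteEnds ends {ebar})) hadj)
  rw [IsBridge, numCC, numCC, hcc] at hb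
  exact lt_irrefl _ hb

/-- The indicator of the side of `u` in `G ∖ ebar`. -/
theorem IsBridge.exists_potential {ends : E → Sym2 V} {ebar : E} {u v : V}
    (hb : IsBridge ends ebar) (hend : ends ebar = s(u, v)) :
    ∃ g : V → ℂ, g u - g v = 1 ∧ ∀ e, e ≠ ebar → ∀ a b, ends e = s(a, b) → g a = g b := by
  let r := Relation.EqvGen (adjRel (deleteEnds ends {ebar}))
  refine ⟨fun w => if r u w then 1 else 0, ?_, fun e he a b hab => ?_⟩
  · simp [r, Relation.EqvGen.refl, hb.not_eqvGen_deleteEnds hend]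
  · have hrab : r a b := .rel _ _ ⟨⟨e, he⟩, hab⟩
    have : r u a ↔ r u b := ⟨fun h => h.trans _ _ _ hrab, fun h => h.trans _ _ _ hrab.symm⟩
    simp only [this]

section ClosedWalks

variable {α : Type*} {S : Set (α × α)}

def ClosedWalkSumsVanish (x : S → ℂ) : Prop :=
  ∀ (n : ℕ) (u : ℕ → α) (w : Fin n → S),
    (∀ i : Fin n, (w i : α × α) = (u i.1, u (i.1 + 1))) → u n = u 0 → ∑ i, x (w i) = 0

/-- On the pairs starting in `A`, replace `x` by `t • (x - δg) + δg`, where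
`δg (a, b) = g a - g b`. -/
def rescaleOn (A : Set α) (g : α → ℂ) (t : ℂ) (x : S → ℂ) : S → ℂ := fun p =>
  if (p : α × α).1 ∈ A then t * x p - (t - 1) * (g (p : α × α).1 - g (p : α × α).2) else x p

theorem iff_zero_of_iff_succ {P : ℕ → Prop} {n : ℕ} (h : ∀ i < n, (P i ↔ P (i + 1))) :
    ∀ k ≤ n, (P k ↔ P 0) := by
  intro k hk
  induction k with
  | zero => rfl
  | succ k ih => exact (h k hk).symm.trans (ih (k.le_succ.trans hk))

theorem Fin.sum_univ_sub_succ {M : Type*} [AddCommGroup M] (f : ℕ → M) (n : ℕ) :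
    ∑ i : Fin n, (f i - f (i + 1)) = f 0 - f n := by
  rw [Fin.sum_univ_eq_sum_range (fun k => f k - f (k + 1)), Finset.sum_range_sub']

/-- Closed-walk sums of `δg` telescope to zero, and a walk never leaves a set `A` that is
closed under steps, so `rescaleOn A g t` preserves vanishing of closed-walk sums. -/
theorem ClosedWalkSumsVanish.rescaleOn {x : S → ℂ} (hx : ClosedWalkSumsVanish x) {A : Set α}
    (hA : ∀ p ∈ S, (p.1 ∈ A ↔ p.2 ∈ A)) (g : α → ℂ) (t : ℂ) :
    ClosedWalkSumsVanish (rescaleOn A g t x) := by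
  intro n u w hw hcl
  have hside : ∀ k ≤ n, (u k ∈ A ↔ u 0 ∈ A) := iff_zero_of_iff_succ fun i hi => by
    simpa [hw ⟨i, hi⟩] using hA _ (w ⟨i, hi⟩).2
  by_cases h0 : u 0 ∈ A
  · calc ∑ i, LamanPaper.rescaleOn A g t x (w i)
          = t * ∑ i, x (w i) - (t - 1) * ∑ i : Fin n, (g (u i) - g (u (i + 1))) := by
            simp only [Finset.mul_sum, ← Finset.sum_sub_distrib]
            refine Finset.sum_congr rfl fun i _ => ?_
            simp [LamanPaper.rescaleOn, hw i, (hside i i.2.le).2 h0]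
        _ = 0 := by rw [hx n u w hw hcl, Fin.sum_univ_sub_succ fun k => g (u k), hcl]; ring
  · rw [← hx n u w hw hcl]
    refine Finset.sum_congr rfl fun i _ => ?_
    simp [LamanPaper.rescaleOn, hw i, (hside i i.2.le).not.2 h0]

end ClosedWalks

namespace Bigraph

variable {B : Bigraph}

theorem τG_eq_mk (e : B.ℰ) : B.τG e = s(B.eFstG e, B.eSndG e) := by
  let := B.ordV; exact (mk_sMin_sMax _).symm

theorem τH_eq_mk (e : B.ℰ) : B.τH e = s(B.eFstH e, B.eSndH e) := by
  let := B.ordW; exact (mk_sMin_sMax _).symm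

theorem eFstG_ne_eSndG (hnl : ¬ B.HasLoop) (e : B.ℰ) : B.eFstG e ≠ B.eSndG e := by
  let := B.ordV; exact sMin_ne_sMax fun h => hnl (.inl ⟨e, h⟩)

theorem eFstH_ne_eSndH (hnl : ¬ B.HasLoop) (e : B.ℰ) : B.eFstH e ≠ B.eSndH e := by
  let := B.ordW; exact sMin_ne_sMax fun h => hnl (.inr ⟨e, h⟩)

section Untangling

variable {ebar : B.ℰ} {E1 E2 : Set B.ℰ} {V1 V2 : Set B.V} {W1 W2 : Set B.W}

theorem Untangles.fst_mem_iff_snd_mem_G (hun : B.Untangles ebar E1 E2 V1 V2 W1 W2) :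
    ∀ p ∈ B.Pset, (p.1 ∈ V1 ↔ p.2 ∈ V1) := by
  obtain ⟨-, -, -, hallE, hV12, -, hGE1, hGb, hGE2, -⟩ := hun
  rintro p ⟨-, e, he⟩
  refine fst_mem_iff_snd_mem (fun e => ?_) he
  rcases hallE e with rfl | h | h
  · exact .inl hGb
  · exact .inl (hGE1 e h)
  · exact .inr fun v hv hv1 => hV12.subset ⟨hv1, hGE2 e h v hv⟩

theorem Untangles.fst_mem_iff_snd_mem_H (hun : B.Untangles ebar E1 E2 V1 V2 W1 W2) :
    ∀ q ∈ B.Qset, (q.1 ∈ W1 ↔ q.2 ∈ W1) := by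
  obtain ⟨-, -, -, hallE, -, -, -, -, -, hW12, -, hHE1, hHE2, hHb⟩ := hun
  rintro q ⟨-, e, he⟩
  refine fst_mem_iff_snd_mem (fun e => ?_) he
  rcases hallE e with rfl | h | h
  · exact .inr fun v hv hv1 => hW12.subset ⟨hv1, hHb v hv⟩
  · exact .inl (hHE1 e h)
  · exact .inr fun v hv hv1 => hW12.subset ⟨hv1, hHE2 e h v hv⟩

theorem Untangles.rescale_mem_ZSet (hun : B.Untangles ebar E1 E2 V1 V2 W1 W2) {g : B.V → ℂ}
    (hg_ebar : g (B.eFstG ebar) - g (B.eSndG ebar) = 1)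
    (hg : ∀ e, e ≠ ebar → g (B.eFstG e) = g (B.eSndG e))
    {lam : {e : B.ℰ // e ≠ ebar} → ℂ} {x : B.Pset → ℂ} {y : B.Qset → ℂ}
    (hxy : (x, y) ∈ B.ZSet ebar lam) {t : ℂ} (ht : t ≠ 0) :
    (rescaleOn V1 g t x, rescaleOn W1 0 t⁻¹ y) ∈ B.ZSet ebar lam := by
  have hG := hun.fst_mem_iff_snd_mem_G
  have hH := hun.fst_mem_iff_snd_mem_H
  obtain ⟨-, -, -, hallE, hV12, -, hGE1, hGb, hGE2, hW12, -, hHE1, hHE2, hHb⟩ := hun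
  obtain ⟨hx1, hy1, hprod, hxw, hyw⟩ := hxy
  dsimp only at hx1 hy1 hprod
  refine ⟨fun p hp => ?_, fun q hq => ?_, ?_, ClosedWalkSumsVanish.rescaleOn hxw hG g t,
    ClosedWalkSumsVanish.rescaleOn hyw hH 0 t⁻¹⟩
  · simp only [rescaleOn, hp, if_pos (hGb _ (B.eFstG_mem ebar)), hx1 p hp, hg_ebar]
    ring
  · have : B.eFstH ebar ∉ W1 := fun h => hW12.subset ⟨h, hHb _ (B.eFstH_mem ebar)⟩
    simp only [rescaleOn, hq, if_neg this, hy1 q hq]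
  · rintro ⟨e, hne⟩ p q hp hq
    rcases hallE e with rfl | h | h
    · exact absurd rfl hne
    · simp only [rescaleOn, hp, hq, if_pos (hGE1 e h _ (B.eFstG_mem e)),
        if_pos (hHE1 e h _ (B.eFstH_mem e)), hg e hne, Pi.zero_apply, sub_self, mul_zero,
        sub_zero, ← hprod ⟨e, hne⟩ p q hp hq]
      field_simp
    · have hp1 : B.eFstG e ∉ V1 := fun h' => hV12.subset ⟨h', hGE2 e h _ (B.eFstG_mem e)⟩
      have hq1 : B.eFstH e ∉ W1 := fun h' => hW12.subset ⟨h', hHE2 e h _ (B.eFstH_mem e)⟩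
      simp only [rescaleOn, hp, hq, if_neg hp1, if_neg hq1]
      exact hprod ⟨e, hne⟩ p q hp hq

theorem Untangles.infinite_ZSet (hun : B.Untangles ebar E1 E2 V1 V2 W1 W2)
    (hbG : IsBridge B.τG ebar) (hnl : ¬ B.HasLoop) {lam : {e : B.ℰ // e ≠ ebar} → ℂ}
    {e₁ : {e : B.ℰ // e ≠ ebar}} (he₁ : e₁.1 ∈ E1) (hl : lam e₁ ≠ 0)
    (hZ : (B.ZSet ebar lam).Nonempty) : (B.ZSet ebar lam).Infinite := by
  obtain ⟨⟨x, y⟩, hxy⟩ := hZ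
  obtain ⟨g, hg_ebar, hg⟩ := hbG.exists_potential (B.τG_eq_mk ebar)
  have hg' : ∀ e, e ≠ ebar → g (B.eFstG e) = g (B.eSndG e) := fun e he =>
    hg e he _ _ (B.τG_eq_mk e)
  let p₁ : B.Pset := ⟨(B.eFstG e₁, B.eSndG e₁), B.eFstG_ne_eSndG hnl e₁, e₁, B.τG_eq_mk e₁⟩
  let q₁ : B.Qset := ⟨(B.eFstH e₁, B.eSndH e₁), B.eFstH_ne_eSndH hnl e₁, e₁, B.τH_eq_mk e₁⟩
  have hx₁ : x p₁ ≠ 0 := left_ne_zero_of_mul (hxy.2.2.1 e₁ p₁ q₁ rfl rfl ▸ hl)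
  have hp₁ : B.eFstG e₁ ∈ V1 := by
    obtain ⟨-, -, -, -, -, -, hGE1, -⟩ := hun
    exact hGE1 e₁ he₁ _ (B.eFstG_mem e₁)
  refine Set.infinite_of_injective_forall_mem
    (f := fun n : ℕ => (rescaleOn V1 g (n + 1) x, rescaleOn W1 0 (n + 1 : ℂ)⁻¹ y))
    (fun m n hmn => ?_)
    (fun n => hun.rescale_mem_ZSet hg_ebar hg' hxy (Nat.cast_add_one_ne_zero n))
  have h := congrFun (congrArg Prod.fst hmn) p₁
  simp only [rescaleOn, p₁, if_pos hp₁, hg' e₁ e₁.2, sub_self, mul_zero, sub_zero] at h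
  exact_mod_cast add_right_cancel (mul_right_cancel₀ hx₁ h)

end Untangling

end Bigraph

theorem MvPolynomial.exists_eval_ne_zero_and_ne_zero {σ R : Type*} [CommRing R] [IsDomain R]
    [Infinite R] {P : MvPolynomial σ R} (hP : P ≠ 0) (i : σ) :
    ∃ lam : σ → R, MvPolynomial.eval lam P ≠ 0 ∧ lam i ≠ 0 := by
  obtain ⟨lam, h⟩ : ∃ lam, MvPolynomial.eval lam (P * .X i) ≠ 0 := by
    by_contra! h
    exact mul_ne_zero hP (MvPolynomial.X_ne_zero i)
      (MvPolynomial.funext fun lam => by simpa using h lam)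
  rw [map_mul, MvPolynomial.eval_X] at h
  exact ⟨lam, left_ne_zero_of_mul h, right_ne_zero_of_mul h⟩

theorem statement11_general (B : Bigraph)
    (ebar : B.ℰ) (E1 E2 : Set B.ℰ) (V1 V2 : Set B.V) (W1 W2 : Set B.W)
    (hun : B.Untangles ebar E1 E2 V1 V2 W1 W2)
    (h1 : E1.Nonempty)
    (hbG : IsBridge B.τG ebar) :
    ¬ ∃ N : ℕ, 1 ≤ N ∧ B.HasLamanNumber ebar N := by
  rintro ⟨N, hN, ⟨-, rfl⟩ | ⟨hnl, P, hP, hgen⟩⟩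
  · exact absurd hN (by norm_num)
  obtain ⟨e₁, he₁⟩ := h1
  obtain ⟨lam, hPl, hl⟩ :=
    MvPolynomial.exists_eval_ne_zero_and_ne_zero hP ⟨e₁, fun h => hun.1 (h ▸ he₁)⟩
  obtain ⟨hfin, hcard⟩ := hgen lam hPl
  have hZ : (B.ZSet ebar lam).Nonempty :=
    Set.nonempty_coe_sort.mp (Nat.card_pos_iff.mp (hcard ▸ hN)).1
  exact hun.infinite_ZSet hbG hnl he₁ hl hZ hfin

/-- If a pseudo-Laman bigraph `B` untangles via `ē` (with `ℰ₁, ℰ₂`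
nonempty) and `ē` is a bridge in `G` but not in `H`, then `B` has no positive Laman number
with respect to `ē`. -/
theorem statement11 (B : Bigraph) (hloop : ¬ B.HasLoop) (hpl : B.PseudoLaman)
    (ebar : B.ℰ) (E1 E2 : Set B.ℰ) (V1 V2 : Set B.V) (W1 W2 : Set B.W)
    (hun : B.Untangles ebar E1 E2 V1 V2 W1 W2)
    (h1 : E1.Nonempty) (h2 : E2.Nonempty)
    (hbG : IsBridge B.τG ebar) (hbH : ¬ IsBridge B.τH ebar) :
    ¬ ∃ N : ℕ, 1 ≤ N ∧ B.HasLamanNumber ebar N :=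
  statement11_general B ebar E1 E2 V1 V2 W1 W2 hun h1 hbG

end LamanPaper
end
end

section
/- Let B=(G,H) be a pseudo-Laman bigraph without self-loops, let ē be a biedge of B, let wt∈ℚ^{ℰ∖{ē}}, and let d=(d_V,d_W) be a bidistance on B compatible with wt. Then the quotient bigraph B_d is also pseudo-Laman. -/
set_option maxHeartbeats 1000000

noncomputable section
open Classical

namespace LamanPaper

variable {V E : Type}

/-! Let `g : E → ℚ` be any level function on the edges of a finite multigraph `G` and
`G_g = ⨆_α G_{≥α} / G_{>α}`. The vertices of `G_g` of level `α` are the components of `G_{>α}`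
touched by an edge of level `α`, and its components of level `α` are the components of `G_{≥α}`
touched by such an edge; untouched components of `G_{>α}` and `G_{≥α}` coincide. So level `α`
contributes `c(G_{>α}) - c(G_{≥α})` to `dim G_g`, and these contributions telescope to
`|V| - c(G) = dim G`. Applied to both graphs of `B`, the quotient `B_d` has the same dimensions as
`B`. -/

theorem eq_of_eqvGen {X Y : Type*} {r : X → X → Prop} {f : X → Y}
    (hf : ∀ a b, r a b → f a = f b) {a b : X} (hab : Relation.EqvGen r a b) : f a = f b :=
  congrArg (Quot.lift f hf) (Quot.eqvGen_sound hab)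

theorem card_range_eq_of_forall_eq_iff {X Y Z : Type*} {f : X → Y} {h : X → Z}
    (hfh : ∀ a b, f a = f b ↔ h a = h b) : Nat.card (Set.range f) = Nat.card (Set.range h) :=
  Nat.card_congr <| (Setoid.quotientKerEquivRange f).symm.trans <|
    (Quotient.congrRight fun a b =>
      Setoid.ker_def.trans <| (hfh a b).trans Setoid.ker_def.symm).trans
        (Setoid.quotientKerEquivRange h)

theorem card_lt_eq_card_lt_add_card_eq {X : Type*} [Finite X] (f : X → ℚ) {t α : ℚ}
    (htα : t < α) (hgap : ∀ x, t < f x → α ≤ f x) :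
    Nat.card {x // t < f x} = Nat.card {x // α < f x} + Nat.card {x // f x = α} := by
  have hsplit : {x | t < f x} = {x | α < f x} ∪ {x | f x = α} := by
    ext x
    simp only [Set.mem_ofPred_eq, Set.mem_union]
    constructor
    · exact fun hx => (hgap x hx).lt_or_eq'
    · rintro (hx | hx) <;> linarith
  have hdisj : Disjoint {x | α < f x} {x | f x = α} :=
    Set.disjoint_left.mpr fun x hx hx' => (ne_of_gt hx) hx'
  change {x | t < f x}.ncard = {x | α < f x}.ncard + {x | f x = α}.ncard
  rw [hsplit, Set.ncard_union_eq hdisj]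

section Components

variable {V E : Type} (ends : E → Sym2 V)

theorem card_quotient_contrSetoid_of_forall_not_mem {S : Set E} (hS : ∀ e, e ∉ S) :
    Nat.card (Quotient (contrSetoid ends S)) = Nat.card V := by
  refine (Nat.card_eq_of_bijective _ ⟨fun u v h => ?_, Quotient.mk_surjective⟩).symm
  exact eq_of_eqvGen (f := id) (fun _ _ ⟨e, he, _⟩ => absurd he (hS e)) (Quotient.exact h)

theorem numCC_eq_card_quotient_contrSetoid {S : Set E} (hS : ∀ e, e ∈ S) :
    numCC ends = Nat.card (Quotient (contrSetoid ends S)) :=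
  Nat.card_congr <| Quotient.congrRight fun u v =>
    ⟨Relation.EqvGen.mono (fun _ _ ⟨e, he⟩ => ⟨e, hS e, he⟩) u v,
      Relation.EqvGen.mono (fun _ _ ⟨e, _, he⟩ => ⟨e, he⟩) u v⟩

end Components

section LevelQuotient

variable {V E : Type} (ends : E → Sym2 V) (g : E → ℚ)

abbrev Inc := {q : E × V // q.2 ∈ ends q.1}

-- `contrSetoid ends S` is by definition `Relation.EqvGen (linkedBy ends S)`.
def linkedBy (S : Set E) (u v : V) : Prop := ∃ e ∈ S, ends e = s(u, v)

-- For `ends = B.τG` and `g = B.gvalG dV` this is `Bigraph.relIncG`; then `LevelVert` and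
-- `levelEnds` are `Bigraph.QVertG` and `Bigraph.quotEndsG`.
def levelRel (a b : Inc ends) : Prop :=
  g a.1.1 = g b.1.1 ∧ Relation.EqvGen (linkedBy ends {e | g a.1.1 < g e}) a.1.2 b.1.2

def levelSetoid : Setoid (Inc ends) :=
  ⟨Relation.EqvGen (levelRel ends g), Relation.EqvGen.is_equivalence _⟩

abbrev LevelVert := Quotient (levelSetoid ends g)

theorem levelRel_equivalence : Equivalence (levelRel ends g) where
  refl _ := ⟨rfl, .refl _⟩
  symm h := ⟨h.1.symm, h.1 ▸ h.2.symm⟩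
  trans h₁ h₂ := ⟨h₁.1.trans h₂.1, h₁.2.trans _ _ _ (h₁.1 ▸ h₂.2)⟩

variable {ends g} in
theorem levelVert_mk_eq_iff {a b : Inc ends} :
    Quotient.mk (levelSetoid ends g) a = Quotient.mk _ b ↔ levelRel ends g a b :=
  Quotient.eq.trans (levelRel_equivalence ends g).eqvGen_iff

def vertLevel : LevelVert ends g → ℚ :=
  Quotient.lift (fun a => g a.1.1) fun _ _ h => (levelVert_mk_eq_iff.mp (Quotient.sound h)).1

theorem vertLevel_mem_range (x : LevelVert ends g) : vertLevel ends g x ∈ Set.range g := by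
  induction x using Quotient.ind with
  | _ a => exact ⟨a.1.1, rfl⟩

def touchedClasses (s : Setoid V) (α : ℚ) : Set (Quotient s) :=
  Set.range fun p : {p : Inc ends // g p.1.1 = α} => Quotient.mk s p.1.1.2

variable {ends g}

theorem eqvGen_ge_of_eqvGen_gt {α : ℚ} {u v : V}
    (h : Relation.EqvGen (linkedBy ends {e | α < g e}) u v) :
    Relation.EqvGen (linkedBy ends {e | α ≤ g e}) u v :=
  Relation.EqvGen.mono (fun _ _ ⟨e, (he : α < g e), hends⟩ => ⟨e, he.le, hends⟩) _ _ h

theorem levelVert_mk_eq_of_eqvGen_gt {α : ℚ} {p q : Inc ends} (hp : g p.1.1 = α)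
    (hq : g q.1.1 = α) (h : Relation.EqvGen (linkedBy ends {e | α < g e}) p.1.2 q.1.2) :
    Quotient.mk (levelSetoid ends g) p = Quotient.mk _ q :=
  levelVert_mk_eq_iff.mpr ⟨hp.trans hq.symm, hp ▸ h⟩

/-- An edge of level exactly `α` has both endpoints touched; one of level `> α` stays inside a
component of `G_{>α}`. -/
theorem mk_mem_touchedClasses_iff_of_eqvGen {α : ℚ} {u v : V}
    (h : Relation.EqvGen (linkedBy ends {e | α ≤ g e}) u v) :
    Quotient.mk (contrSetoid ends {e | α < g e}) u ∈ touchedClasses ends g _ α ↔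
      Quotient.mk (contrSetoid ends {e | α < g e}) v ∈ touchedClasses ends g _ α := by
  induction h with
  | rel a b hab =>
    obtain ⟨f, hf, hfab⟩ := hab
    rcases (show α ≤ g f from hf).eq_or_lt with hfα | hfα
    · have ha : a ∈ ends f := hfab ▸ Sym2.mem_mk_left a b
      have hb : b ∈ ends f := hfab ▸ Sym2.mem_mk_right a b
      exact iff_of_true ⟨⟨⟨(f, a), ha⟩, hfα.symm⟩, rfl⟩ ⟨⟨⟨(f, b), hb⟩, hfα.symm⟩, rfl⟩
    · rw [Quotient.sound (Relation.EqvGen.rel _ _ ⟨f, hfα, hfab⟩ :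
        Relation.EqvGen (linkedBy ends {e | α < g e}) a b)]
  | refl => exact Iff.rfl
  | symm _ _ _ ih => exact ih.symm
  | trans _ _ _ _ _ ih₁ ih₂ => exact ih₁.trans ih₂

theorem eqvGen_gt_of_eqvGen_ge_of_not_mem {α : ℚ} {u v : V}
    (h : Relation.EqvGen (linkedBy ends {e | α ≤ g e}) u v)
    (hu : Quotient.mk (contrSetoid ends {e | α < g e}) u ∉ touchedClasses ends g _ α) :
    Relation.EqvGen (linkedBy ends {e | α < g e}) u v := by
  induction h with
  | rel a b hab =>
    obtain ⟨f, hf, hfab⟩ := hab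
    rcases (show α ≤ g f from hf).eq_or_lt with hfα | hfα
    · exact absurd ⟨⟨⟨(f, a), hfab ▸ Sym2.mem_mk_left a b⟩, hfα.symm⟩, rfl⟩ hu
    · exact .rel _ _ ⟨f, hfα, hfab⟩
  | refl => exact .refl _
  | symm _ _ hab ih => exact (ih <| (mk_mem_touchedClasses_iff_of_eqvGen hab).not.mpr hu).symm
  | trans _ _ _ hab _ ih₁ ih₂ =>
    exact (ih₁ hu).trans _ _ _ (ih₂ <| (mk_mem_touchedClasses_iff_of_eqvGen hab).not.mp hu)

theorem mk_ge_mem_touchedClasses_iff {α : ℚ} {u : V} :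
    Quotient.mk (contrSetoid ends {e | α ≤ g e}) u ∈ touchedClasses ends g _ α ↔
      Quotient.mk (contrSetoid ends {e | α < g e}) u ∈ touchedClasses ends g _ α := by
  constructor
  · rintro ⟨p, hpu⟩
    exact (mk_mem_touchedClasses_iff_of_eqvGen (Quotient.exact hpu)).mp ⟨p, rfl⟩
  · rintro ⟨p, hpu⟩
    exact ⟨p, Quotient.sound (eqvGen_ge_of_eqvGen_gt (Quotient.exact hpu))⟩

variable (ends g)

theorem card_compl_touchedClasses (α : ℚ) :
    Nat.card ↥(touchedClasses ends g (contrSetoid ends {e | α < g e}) α)ᶜ =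
      Nat.card ↥(touchedClasses ends g (contrSetoid ends {e | α ≤ g e}) α)ᶜ := by
  let X := {u : V // Quotient.mk (contrSetoid ends {e | α < g e}) u ∉ touchedClasses ends g _ α}
  have hrange_gt : Set.range (fun u : X => Quotient.mk (contrSetoid ends {e | α < g e}) u.1) =
      (touchedClasses ends g _ α)ᶜ := by
    ext c
    induction c using Quotient.ind with
    | _ u => exact ⟨fun ⟨v, hv⟩ => hv ▸ v.2, fun hu => ⟨⟨u, hu⟩, rfl⟩⟩
  have hrange_ge : Set.range (fun u : X => Quotient.mk (contrSetoid ends {e | α ≤ g e}) u.1) =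
      (touchedClasses ends g _ α)ᶜ := by
    ext c
    induction c using Quotient.ind with
    | _ u =>
      refine ⟨fun ⟨v, hv⟩ => hv ▸ mk_ge_mem_touchedClasses_iff.not.mpr v.2,
        fun hu => ⟨⟨u, mk_ge_mem_touchedClasses_iff.not.mp hu⟩, rfl⟩⟩
  rw [← hrange_gt, ← hrange_ge]
  refine card_range_eq_of_forall_eq_iff fun u v => ⟨fun h => ?_, fun h => ?_⟩
  · exact Quotient.sound (eqvGen_ge_of_eqvGen_gt (Quotient.exact h))
  · exact Quotient.sound (eqvGen_gt_of_eqvGen_ge_of_not_mem (Quotient.exact h) u.2)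

theorem card_levelVert_eq (α : ℚ) :
    Nat.card {x // vertLevel ends g x = α} =
      Nat.card ↥(touchedClasses ends g (contrSetoid ends {e | α < g e}) α) := by
  have hrange : Set.range (fun p : {p : Inc ends // g p.1.1 = α} =>
      Quotient.mk (levelSetoid ends g) p.1) = {x | vertLevel ends g x = α} := by
    ext x
    induction x using Quotient.ind with
    | _ a => exact ⟨fun ⟨p, hp⟩ => hp ▸ p.2, fun ha => ⟨⟨a, ha⟩, rfl⟩⟩
  change Nat.card ↥{x | vertLevel ends g x = α} = _
  rw [← hrange]
  refine card_range_eq_of_forall_eq_iff fun p q => levelVert_mk_eq_iff.trans ?_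
  rw [levelRel, p.2, q.2]
  exact ⟨fun h => Quotient.sound h.2, fun h => ⟨rfl, Quotient.exact h⟩⟩

def geComponent (α : ℚ) :
    LevelVert ends g → Option (Quotient (contrSetoid ends {e | α ≤ g e})) :=
  Quotient.lift (fun a => if g a.1.1 = α then some (Quotient.mk _ a.1.2) else none)
    fun a b h => by
      obtain ⟨hab, hconn⟩ := levelVert_mk_eq_iff.mp (Quotient.sound h)
      by_cases ha : g a.1.1 = α
      · rw [if_pos ha, if_pos (hab ▸ ha)]
        exact congrArg some (Quotient.sound (eqvGen_ge_of_eqvGen_gt (ha ▸ hconn)))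
      · rw [if_neg ha, if_neg (hab ▸ ha)]

end LevelQuotient

section LevelEnds

variable {V E : Type} [LinearOrder V] (ends : E → Sym2 V) (g : E → ℚ)

theorem sMin_sMax_eq (s : Sym2 V) : s(sMin s, sMax s) = s := by
  induction s using Sym2.ind with
  | _ x y =>
    rcases le_total x y with h | h
    · simp [sMin, sMax, h]
    · simp [sMin, sMax, h, Sym2.eq_swap]

def levelEnds : E → Sym2 (LevelVert ends g) := fun e =>
  s(Quotient.mk _ ⟨(e, sMin (ends e)), sMin_mem _⟩, Quotient.mk _ ⟨(e, sMax (ends e)), sMax_mem _⟩)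

variable {ends g}

theorem levelEnds_eq {f : E} {u v : V} (h : ends f = s(u, v)) (hu : u ∈ ends f)
    (hv : v ∈ ends f) :
    levelEnds ends g f =
      s(Quotient.mk (levelSetoid ends g) ⟨(f, u), hu⟩, Quotient.mk _ ⟨(f, v), hv⟩) := by
  rcases Sym2.eq_iff.mp ((sMin_sMax_eq (ends f)).trans h) with ⟨rfl, rfl⟩ | ⟨rfl, rfl⟩
  · rfl
  · exact Sym2.eq_swap

theorem vertLevel_eq_of_levelEnds_eq {e : E} {x y : LevelVert ends g}
    (h : levelEnds ends g e = s(x, y)) : vertLevel ends g x = g e ∧ vertLevel ends g y = g e := by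
  rcases Sym2.eq_iff.mp h with ⟨rfl, rfl⟩ | ⟨rfl, rfl⟩ <;> exact ⟨rfl, rfl⟩

variable (ends g)

def compLevel : Quotient (ccSetoid (levelEnds ends g)) → ℚ :=
  Quotient.lift (vertLevel ends g) fun _ _ h =>
    eq_of_eqvGen (fun _ _ ⟨_, he⟩ =>
      (vertLevel_eq_of_levelEnds_eq he).1.trans (vertLevel_eq_of_levelEnds_eq he).2.symm) h

theorem compLevel_mem_range (y : Quotient (ccSetoid (levelEnds ends g))) :
    compLevel ends g y ∈ Set.range g := by
  induction y using Quotient.ind with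
  | _ x => exact vertLevel_mem_range ends g x

variable {ends g}

theorem geComponent_eq_of_adj {α : ℚ} {x y : LevelVert ends g}
    (h : adjRel (levelEnds ends g) x y) : geComponent ends g α x = geComponent ends g α y := by
  obtain ⟨e, he⟩ := h
  have hsame : geComponent ends g α (Quotient.mk _ ⟨(e, sMin (ends e)), sMin_mem _⟩) =
      geComponent ends g α (Quotient.mk _ ⟨(e, sMax (ends e)), sMax_mem _⟩) := by
    by_cases heα : g e = α
    · simp only [geComponent, Quotient.lift_mk, if_pos heα]
      exact congrArg some (Quotient.sound (.rel _ _ ⟨e, heα.ge, (sMin_sMax_eq _).symm⟩))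
    · simp only [geComponent, Quotient.lift_mk, if_neg heα]
  rcases Sym2.eq_iff.mp he with ⟨rfl, rfl⟩ | ⟨rfl, rfl⟩
  · exact hsame
  · exact hsame.symm

theorem eqvGen_adj_of_eqvGen_ge {α : ℚ} {p q : Inc ends} (hp : g p.1.1 = α)
    (hq : g q.1.1 = α) (h : Relation.EqvGen (linkedBy ends {e | α ≤ g e}) p.1.2 q.1.2) :
    Relation.EqvGen (adjRel (levelEnds ends g)) (Quotient.mk _ p) (Quotient.mk _ q) := by
  suffices ∀ u v, Relation.EqvGen (linkedBy ends {e | α ≤ g e}) u v →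
      ∀ p q : Inc ends, g p.1.1 = α → g q.1.1 = α →
      Relation.EqvGen (linkedBy ends {e | α < g e}) p.1.2 u →
      Relation.EqvGen (linkedBy ends {e | α < g e}) q.1.2 v →
      Relation.EqvGen (adjRel (levelEnds ends g)) (Quotient.mk _ p) (Quotient.mk _ q) from
    this _ _ h p q hp hq (.refl _) (.refl _)
  intro u v huv
  induction huv with
  | rel a b hab =>
    intro p q hp hq hpa hqb
    obtain ⟨f, hf, hfab⟩ := hab
    rcases (show α ≤ g f from hf).eq_or_lt with hfα | hfα
    · have ha : a ∈ ends f := hfab ▸ Sym2.mem_mk_left a b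
      have hb : b ∈ ends f := hfab ▸ Sym2.mem_mk_right a b
      rw [levelVert_mk_eq_of_eqvGen_gt (q := ⟨(f, a), ha⟩) hp hfα.symm hpa,
        levelVert_mk_eq_of_eqvGen_gt (q := ⟨(f, b), hb⟩) hq hfα.symm hqb]
      exact .rel _ _ ⟨f, levelEnds_eq hfab ha hb⟩
    · have hab : Relation.EqvGen (linkedBy ends {e | α < g e}) a b := .rel _ _ ⟨f, hfα, hfab⟩
      rw [levelVert_mk_eq_of_eqvGen_gt hp hq (hpa.trans _ _ _ (hab.trans _ _ _ hqb.symm))]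
      exact .refl _
  | refl a =>
    intro p q hp hq hpa hqa
    rw [levelVert_mk_eq_of_eqvGen_gt hp hq (hpa.trans _ _ _ hqa.symm)]
    exact .refl _
  | symm a b _ ih =>
    intro p q hp hq hpb hqa
    exact (ih q p hq hp hqa hpb).symm
  | trans a b c hab _ ih₁ ih₂ =>
    intro p q hp hq hpa hqc
    obtain ⟨⟨m, hm⟩, hmb⟩ :=
      (mk_mem_touchedClasses_iff_of_eqvGen hab).mp ⟨⟨p, hp⟩, Quotient.sound hpa⟩
    exact (ih₁ p m hp hm hpa (Quotient.exact hmb)).trans _ _ _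
      (ih₂ m q hm hq (Quotient.exact hmb) hqc)

variable (ends g)

theorem card_levelComp_eq (α : ℚ) :
    Nat.card {y // compLevel ends g y = α} =
      Nat.card ↥(touchedClasses ends g (contrSetoid ends {e | α ≤ g e}) α) := by
  have hrange : Set.range (fun p : {p : Inc ends // g p.1.1 = α} =>
      Quotient.mk (ccSetoid (levelEnds ends g)) (Quotient.mk (levelSetoid ends g) p.1)) =
        {y | compLevel ends g y = α} := by
    ext y
    induction y using Quotient.ind with
    | _ x =>
      induction x using Quotient.ind with
      | _ a => exact ⟨fun ⟨p, hp⟩ => hp ▸ p.2, fun ha => ⟨⟨a, ha⟩, rfl⟩⟩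
  change Nat.card ↥{y | compLevel ends g y = α} = _
  rw [← hrange]
  refine card_range_eq_of_forall_eq_iff fun p q => ⟨fun h => ?_, fun h => ?_⟩
  · have := eq_of_eqvGen (fun _ _ => geComponent_eq_of_adj (α := α)) (Quotient.exact h)
    simpa [geComponent, p.2, q.2] using this
  · exact Quotient.sound (eqvGen_adj_of_eqvGen_ge p.2 q.2 (Quotient.exact h))

theorem card_vertLevel_gt_add_of_forall_not_lt (t : ℚ) (hnone : ∀ β ∈ Set.range g, ¬ t < β) :
    Nat.card {x // t < vertLevel ends g x} + Nat.card (Quotient (contrSetoid ends {e | t < g e})) =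
      Nat.card {y // t < compLevel ends g y} + Nat.card V := by
  have : IsEmpty {x // t < vertLevel ends g x} :=
    ⟨fun x => hnone _ (vertLevel_mem_range ends g x.1) x.2⟩
  have : IsEmpty {y // t < compLevel ends g y} :=
    ⟨fun y => hnone _ (compLevel_mem_range ends g y.1) y.2⟩
  rw [Nat.card_of_isEmpty (α := {x // t < vertLevel ends g x}),
    Nat.card_of_isEmpty (α := {y // t < compLevel ends g y}),
    card_quotient_contrSetoid_of_forall_not_mem ends (S := {e | t < g e})
      fun e => hnone _ ⟨e, rfl⟩]

end LevelEnds

section Counting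

variable {V E : Type} [LinearOrder V] [Finite V] (ends : E → Sym2 V) (g : E → ℚ)

/-- Level `α` of `G_g` is `G_{≥α} / G_{>α}`, whose dimension is `c(G_{>α}) - c(G_{≥α})`. -/
theorem card_level_add_card_ge (α : ℚ) :
    Nat.card {x // vertLevel ends g x = α} + Nat.card (Quotient (contrSetoid ends {e | α ≤ g e})) =
      Nat.card {y // compLevel ends g y = α} +
        Nat.card (Quotient (contrSetoid ends {e | α < g e})) := by
  rw [card_levelVert_eq, card_levelComp_eq,
    ← Set.ncard_add_ncard_compl (touchedClasses ends g (contrSetoid ends {e | α ≤ g e}) α),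
    ← Set.ncard_add_ncard_compl (touchedClasses ends g (contrSetoid ends {e | α < g e}) α)]
  have := card_compl_touchedClasses ends g α
  simp only [Nat.card_coe_set_eq] at this ⊢
  omega

/-- The identities `card_level_add_card_ge` telescope over the levels above `t`. -/
theorem card_vertLevel_gt_add [Finite E] (t : ℚ) :
    Nat.card {x // t < vertLevel ends g x} + Nat.card (Quotient (contrSetoid ends {e | t < g e})) =
      Nat.card {y // t < compLevel ends g y} + Nat.card V := by
  obtain ⟨n, hn⟩ : ∃ n, ((Set.finite_range g).toFinset.filter (t < ·)).card = n := ⟨_, rfl⟩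
  induction n generalizing t with
  | zero =>
    refine card_vertLevel_gt_add_of_forall_not_lt ends g t fun β hβ htβ => ?_
    have hmem : β ∈ (Set.finite_range g).toFinset.filter (t < ·) :=
      Finset.mem_filter.mpr ⟨(Set.finite_range g).mem_toFinset.mpr hβ, htβ⟩
    rw [Finset.card_eq_zero.mp hn] at hmem
    exact Finset.notMem_empty β hmem
  | succ n ih =>
    set L := (Set.finite_range g).toFinset.filter (t < ·)
    have hL : L.Nonempty := Finset.card_pos.mp (hn ▸ n.succ_pos)
    obtain ⟨α, hαL, hαmin⟩ : ∃ α ∈ L, ∀ β ∈ L, α ≤ β :=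
      ⟨L.min' hL, L.min'_mem hL, fun β hβ => L.min'_le β hβ⟩
    have htα : t < α := (Finset.mem_filter.mp hαL).2
    have hgap : ∀ β ∈ Set.range g, t < β → α ≤ β := fun β hβ htβ =>
      hαmin β (Finset.mem_filter.mpr ⟨(Set.finite_range g).mem_toFinset.mpr hβ, htβ⟩)
    have hLα : (Set.finite_range g).toFinset.filter (α < ·) = L.erase α := by
      ext β
      simp only [Finset.mem_filter, Finset.mem_erase, Set.Finite.mem_toFinset, L]
      constructor
      · rintro ⟨hβ, hαβ⟩
        exact ⟨hαβ.ne', hβ, htα.trans hαβ⟩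
      · rintro ⟨hβα, hβ, htβ⟩
        exact ⟨hβ, (hgap β hβ htβ).lt_of_ne' hβα⟩
    have hge : {e | α ≤ g e} = {e | t < g e} :=
      Set.ext fun e => ⟨htα.trans_le, hgap _ ⟨e, rfl⟩⟩
    have hvert := card_lt_eq_card_lt_add_card_eq (vertLevel ends g) htα
      fun x => hgap _ (vertLevel_mem_range ends g x)
    have hcomp := card_lt_eq_card_lt_add_card_eq (compLevel ends g) htα
      fun y => hgap _ (compLevel_mem_range ends g y)
    have hlevel := card_level_add_card_ge ends g α
    rw [hge] at hlevel
    have hα := ih α (by rw [hLα, Finset.card_erase_of_mem hαL, hn]; rfl)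
    omega

theorem gDim_levelEnds [Finite E] : gDim (levelEnds ends g) = gDim ends := by
  obtain ⟨b, hb⟩ := (Set.finite_range g).bddBelow
  have hbelow : ∀ β ∈ Set.range g, b - 1 < β := fun β hβ => by linarith [hb hβ]
  have hcount := card_vertLevel_gt_add ends g (b - 1)
  rw [Nat.card_congr (Equiv.subtypeUnivEquiv fun x => hbelow _ (vertLevel_mem_range ends g x)),
    Nat.card_congr (Equiv.subtypeUnivEquiv fun y => hbelow _ (compLevel_mem_range ends g y)),
    ← numCC_eq_card_quotient_contrSetoid ends (S := {e | b - 1 < g e})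
      fun e => hbelow _ ⟨e, rfl⟩] at hcount
  have hle : numCC (levelEnds ends g) ≤ Nat.card (LevelVert ends g) :=
    Nat.card_le_card_of_surjective _ Quotient.mk_surjective
  have hle' : numCC ends ≤ Nat.card V := Nat.card_le_card_of_surjective _ Quotient.mk_surjective
  unfold gDim numCC at *
  omega

end Counting

theorem Bigraph.dimG_quotBigraph (B : Bigraph) (dV : ↥B.Pset → ℚ) (dW : ↥B.Qset → ℚ)
    (oV : LinearOrder (B.QVertG dV)) (oW : LinearOrder (B.QVertH dW)) :
    (B.quotBigraph dV dW oV oW).dimG = B.dimG :=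
  letI := B.ordV
  gDim_levelEnds B.τG (B.gvalG dV)

theorem Bigraph.dimH_quotBigraph (B : Bigraph) (dV : ↥B.Pset → ℚ) (dW : ↥B.Qset → ℚ)
    (oV : LinearOrder (B.QVertG dV)) (oW : LinearOrder (B.QVertH dW)) :
    (B.quotBigraph dV dW oV oW).dimH = B.dimH :=
  letI := B.ordW
  gDim_levelEnds B.τH (B.gvalH dW)

theorem statement14_general (B : Bigraph) (hpl : B.PseudoLaman)
    (dV : ↥B.Pset → ℚ) (dW : ↥B.Qset → ℚ)
    (oV : LinearOrder (B.QVertG dV)) (oW : LinearOrder (B.QVertH dW)) :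
    (B.quotBigraph dV dW oV oW).PseudoLaman := by
  rwa [Bigraph.PseudoLaman, Bigraph.dimG_quotBigraph, Bigraph.dimH_quotBigraph]

/-- If `B` is pseudo-Laman and `d` is a bidistance on `B` compatible with
some weight vector `wt`, then the quotient bigraph `B_d` is pseudo-Laman as well. -/
theorem statement14 (B : Bigraph) (hloop : ¬ B.HasLoop) (hpl : B.PseudoLaman)
    (ebar : B.ℰ) (wt : {e : B.ℰ // e ≠ ebar} → ℚ)
    (dV : ↥B.Pset → ℚ) (dW : ↥B.Qset → ℚ)
    (hd : B.IsBidistance ebar wt dV dW)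
    (oV : LinearOrder (B.QVertG dV)) (oW : LinearOrder (B.QVertH dW)) :
    (B.quotBigraph dV dW oV oW).PseudoLaman :=
  statement14_general B hpl dV dW oV oW

end LamanPaper
end
end
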